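/- arXiv:1305.1676 — 2 statements merged into one kernel-verified Lean document; each statement's English description precedes it below -/
import Mathlib

section
/- Let k ≥ 1 be an integer and ξ ∈ (0,1] a real number, and set q = ⌈3(k+1)/ξ⌉. Then for all sufficiently large n, the number of labelled graphs G on vertex set {1,…,n} such that δ_k(G) ≥ ξn and G contains at least q vertices that are (k,q)-dangerous is at most 2^{−n} · 2^{n(n−1)/2}. -/
open Filter Topology

/-- Cop-win positions in the Cops and Robbers game with `k` cops, cops to move:
the least set of positions `(c, r)` such that `(c, r)` is a member whenever the cops
can move (each staying or moving along an edge) to some `c'` with `c' i = r` for some `i`,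
or to some `c'` such that every robber move from `r` lands in a member position. -/
inductive CopsWinPos {V : Type*} (G : SimpleGraph V) {k : ℕ} : (Fin k → V) → V → Prop
  | capture (c : Fin k → V) (r : V) (c' : Fin k → V)
      (hmove : ∀ i, c' i = c i ∨ G.Adj (c i) (c' i))
      (hc : ∃ i, c' i = r) : CopsWinPos G c r
  | advance (c : Fin k → V) (r : V) (c' : Fin k → V)
      (hmove : ∀ i, c' i = c i ∨ G.Adj (c i) (c' i))
      (h : ∀ r', r' = r ∨ G.Adj r r' → CopsWinPos G c' r') : CopsWinPos G c r

/-- `G` is `k`-cop-win: some initial cop placement wins against every robber placement. -/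
def IsKCopWin {V : Type*} (G : SimpleGraph V) (k : ℕ) : Prop :=
  ∃ c : Fin k → V, ∀ r : V, (∃ i, c i = r) ∨ CopsWinPos G c r

/-- `G` has a dominating set of cardinality `k`. -/
def HasDomSet {V : Type*} (G : SimpleGraph V) (k : ℕ) : Prop :=
  ∃ S : Finset V, S.card = k ∧ ∀ v ∉ S, ∃ u ∈ S, G.Adj u v

/-- `δ_k(G)`: minimum over `k`-element vertex sets `S` of the number of vertices
not in `S` and not adjacent to any vertex of `S`. -/
noncomputable def deltaK {V : Type*} [Fintype V] (G : SimpleGraph V) (k : ℕ) : ℕ :=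
  sInf {m | ∃ S : Finset V, S.card = k ∧ {w : V | ∀ u ∈ S, w ≠ u ∧ ¬ G.Adj u w}.ncard = m}

/-- `b` is `(k,q)`-dangerous: there is a `k`-set `A` avoiding `b` with `|N^c(A) ∩ N(b)| ≤ 2q`. -/
def Dangerous {V : Type*} [Fintype V] (G : SimpleGraph V) (k q : ℕ) (b : V) : Prop :=
  ∃ A : Finset V, A.card = k ∧ b ∉ A ∧
    {w : V | (∀ u ∈ A, w ≠ u ∧ ¬ G.Adj u w) ∧ G.Adj b w}.ncard ≤ 2 * q

/-!
Among at least `q` dangerous vertices a greedy choice yields `s = ⌈q / (2k+1)⌉` of them,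
`b₁, …, bₛ`, with witnesses `A₁, …, Aₛ` such that no `bᵢ` lies in any `Aⱼ`. Fix such data
(at most `(n+1)^{s(k+1)}` choices) and let `U` be the vertices outside all `bᵢ` and `Aⱼ`.
A graph is determined by its edges other than the pairs `bⱼ w` with `w ∈ U`, and by the sets
`N(bⱼ) ∩ U`. The former already determine `Sⱼ = N^c(Aⱼ) ∩ U`, of size at least
`ξn - s(k+1)`, and `bⱼ` has at most `2q` neighbours in `Sⱼ`; so `N(bⱼ) ∩ U` ranges over at
most `(n+1)^{2q} 2^{n - ξn}` sets instead of `2^{|U|}`. The resulting factor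
`2^{-sξn} ≤ 2^{-3n/2}` beats all the polynomial factors.
-/

open Finset

section Extraction

variable {V : Type*} [DecidableEq V]

theorem exists_vertex_card_filter_mem_le {D : Finset V} (hD : D.Nonempty) {A : V → Finset V}
    {k : ℕ} (hA : ∀ v ∈ D, #(A v) ≤ k) : ∃ u ∈ D, #{v ∈ D | u ∈ A v} ≤ k := by
  refine exists_le_of_sum_le hD ?_
  calc ∑ u ∈ D, #{v ∈ D | u ∈ A v} = ∑ v ∈ D, #{u ∈ D | u ∈ A v} :=
        sum_card_bipartiteAbove_eq_sum_card_bipartiteBelow (fun u v => u ∈ A v)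
    _ ≤ ∑ _v ∈ D, k := sum_le_sum fun v hv =>
        (card_le_card fun u hu => (mem_filter.mp hu).2).trans (hA v hv)

/-- Greedy selection: a vertex `u` that lies in few of the sets `A v` is kept, and the at most
`2k` vertices `v` with `v ∈ A u` or `u ∈ A v` are discarded. -/
theorem exists_subset_forall_notMem (A : V → Finset V) (k : ℕ) (D : Finset V)
    (hA : ∀ v ∈ D, #(A v) ≤ k) (hself : ∀ v ∈ D, v ∉ A v) :
    ∃ Q ⊆ D, #D ≤ (2 * k + 1) * #Q ∧ ∀ u ∈ Q, ∀ v ∈ Q, u ∉ A v := by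
  induction D using Finset.strongInduction with
  | _ D ih =>
  rcases D.eq_empty_or_nonempty with rfl | hD
  · exact ⟨∅, by simp⟩
  obtain ⟨u, hu, hu_few⟩ := exists_vertex_card_filter_mem_le hD hA
  set K := insert u ({v ∈ D | v ∈ A u} ∪ {v ∈ D | u ∈ A v})
  have hKD : K ⊆ D := insert_subset hu (union_subset (filter_subset _ _) (filter_subset _ _))
  have hK : #K ≤ 2 * k + 1 :=
    calc #K ≤ #{v ∈ D | v ∈ A u} + #{v ∈ D | u ∈ A v} + 1 :=
          (card_insert_le _ _).trans (Nat.add_le_add_right (card_union_le _ _) 1)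
      _ ≤ k + k + 1 := by
          gcongr
          exact (card_le_card fun v hv => (mem_filter.mp hv).2).trans (hA u hu)
      _ = 2 * k + 1 := by ring
  obtain ⟨Q, hQ, hQcard, hQA⟩ := ih (D \ K) (sdiff_ssubset hKD ⟨u, mem_insert_self _ _⟩)
    (fun v hv => hA v (mem_sdiff.mp hv).1) (fun v hv => hself v (mem_sdiff.mp hv).1)
  have hQK : ∀ v ∈ Q, v ∈ D ∧ v ∉ K := fun v hv => mem_sdiff.mp (hQ hv)
  have huQ : u ∉ Q := fun h => (hQK u h).2 (mem_insert_self _ _)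
  refine ⟨insert u Q, insert_subset hu (hQ.trans sdiff_subset), ?_, ?_⟩
  · have := card_sdiff_add_card_eq_card hKD
    rw [card_insert_of_notMem huQ]
    nlinarith
  · have hfar : ∀ v ∈ Q, v ∉ A u ∧ u ∉ A v := fun v hv =>
      ⟨fun h => (hQK v hv).2 (by simp [K, (hQK v hv).1, h]),
        fun h => (hQK v hv).2 (by simp [K, (hQK v hv).1, h])⟩
    simp only [mem_insert]
    rintro v (rfl | hv) w (rfl | hw)
    exacts [hself _ hu, (hfar _ hw).2, (hfar _ hv).1, hQA v hv w hw]

end Extraction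

/-- `N^c(S)` in the paper. -/
def SimpleGraph.nonNbrs {V : Type*} (G : SimpleGraph V) (S : Finset V) : Set V :=
  {w | ∀ u ∈ S, w ≠ u ∧ ¬ G.Adj u w}

theorem deltaK_le_ncard_nonNbrs {V : Type*} [Fintype V] (G : SimpleGraph V) {k : ℕ}
    {S : Finset V} (hS : S.card = k) : deltaK G k ≤ (G.nonNbrs S).ncard :=
  Nat.sInf_le ⟨S, hS, rfl⟩

section Witnesses

variable {V : Type*} [Fintype V] [DecidableEq V] {s : ℕ}

def IsDangerFamily (G : SimpleGraph V) (p r : ℕ) (b : Fin s → V) (A : Fin s → Finset V) :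
    Prop :=
  ∀ j, r ≤ (G.nonNbrs (A j)).ncard ∧ (G.nonNbrs (A j) ∩ G.neighborSet (b j)).ncard ≤ 2 * p

theorem exists_isDangerFamily {G : SimpleGraph V} {k p m r : ℕ} (hs : s ≤ m ⌈/⌉ (2 * k + 1))
    (hδ : ∀ S : Finset V, #S = k → r ≤ (G.nonNbrs S).ncard)
    (hm : m ≤ {v | Dangerous G k p v}.ncard) :
    ∃ (b : Fin s → V) (A : Fin s → Finset V),
      Function.Injective b ∧ (∀ j, #(A j) = k) ∧ (∀ i j, b i ∉ A j) ∧
        IsDangerFamily G p r b A := by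
  classical
  set D := {v | Dangerous G k p v}.toFinset
  have hD : ∀ v ∈ D, Dangerous G k p v := fun v hv => by simpa [D] using hv
  choose! wit hwit_card hwit_self hwit_bound using hD
  obtain ⟨Q, hQD, hDQ, hQ⟩ := exists_subset_forall_notMem wit k D
    (fun v hv => (hwit_card v hv).le) hwit_self
  have hsQ : s ≤ #Q := by
    refine hs.trans ?_
    rw [ceilDiv_le_iff_le_smul (by omega), smul_eq_mul]
    exact hm.trans ((Set.ncard_eq_toFinset_card' _).trans_le hDQ)
  let b : Fin s → V := fun j => Q.equivFin.symm (Fin.castLE hsQ j)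
  have hbQ : ∀ j, b j ∈ Q := fun j => (Q.equivFin.symm _).2
  refine ⟨b, fun j => wit (b j), ?_, fun j => hwit_card _ (hQD (hbQ j)),
    fun i j => hQ _ (hbQ i) _ (hbQ j), fun j => ⟨hδ _ (hwit_card _ (hQD (hbQ j))),
      hwit_bound _ (hQD (hbQ j))⟩⟩
  intro i j hij
  exact Fin.castLE_injective hsQ (Q.equivFin.symm.injective (Subtype.ext hij))

end Witnesses

section SubsetCounting

variable {α : Type*} [Fintype α] [DecidableEq α]

theorem card_filter_card_le_le (m : ℕ) :
    #({Y | #Y ≤ m} : Finset (Finset α)) ≤ (Fintype.card α + 1) ^ m := by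
  let toSet : (Fin m → Option α) → Finset α := fun f => univ.biUnion fun i => (f i).toFinset
  have hsurj : ({Y | #Y ≤ m} : Finset (Finset α)) ⊆ univ.image toSet := by
    intro Y hY
    have hlen : Y.toList.length ≤ m := by simpa using (mem_filter.mp hY).2
    refine mem_image.mpr ⟨fun i => Y.toList[(i : ℕ)]?, mem_univ _, ?_⟩
    ext x
    simp only [toSet, mem_biUnion, mem_univ, true_and, Option.mem_toFinset, Option.mem_def]
    rw [← Finset.mem_toList, List.mem_iff_getElem?]
    exact ⟨fun ⟨i, hi⟩ => ⟨i, hi⟩,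
      fun ⟨i, hi⟩ => ⟨⟨i, (List.getElem?_eq_some_iff.mp hi).1.trans_le hlen⟩, hi⟩⟩
  calc #({Y | #Y ≤ m} : Finset (Finset α)) ≤ #(univ.image toSet) := card_le_card hsurj
    _ ≤ #(univ : Finset (Fin m → Option α)) := card_image_le
    _ = (Fintype.card α + 1) ^ m := by simp

theorem card_filter_card_inter_le (T S : Finset α) (m : ℕ) :
    #{X ∈ T.powerset | #(X ∩ S) ≤ m} ≤ (Fintype.card α + 1) ^ m * 2 ^ #(T \ S) := by
  calc #{X ∈ T.powerset | #(X ∩ S) ≤ m}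
      ≤ #(({Y | #Y ≤ m} : Finset (Finset α)) ×ˢ (T \ S).powerset) := by
        refine card_le_card_of_injOn (fun X => (X ∩ S, X \ S)) (fun X hX => ?_) ?_
        · simp only [coe_filter, mem_powerset] at hX
          simp only [coe_product, Set.mem_prod, coe_filter, mem_univ, true_and,
            Set.mem_ofPred_eq, coe_powerset, Set.mem_preimage, Set.mem_powerset_iff, coe_subset]
          exact ⟨hX.2, sdiff_subset_sdiff hX.1 le_rfl⟩
        · intro X _ Y _ hXY
          simp only [Prod.mk.injEq] at hXY
          rw [← sdiff_union_inter X S, ← sdiff_union_inter Y S, hXY.1, hXY.2]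
    _ = #({Y | #Y ≤ m} : Finset (Finset α)) * 2 ^ #(T \ S) := by rw [card_product, card_powerset]
    _ ≤ (Fintype.card α + 1) ^ m * 2 ^ #(T \ S) := by gcongr; exact card_filter_card_le_le m

end SubsetCounting

section FixedFamily

variable {V : Type*} [DecidableEq V] {s : ℕ} (b : Fin s → V) (A : Fin s → Finset V)

def touched : Finset V := univ.image b ∪ univ.biUnion A

variable {b A}

theorem apply_mem_touched (j : Fin s) : b j ∈ touched b A :=
  mem_union_left _ (mem_image_of_mem b (mem_univ j))

theorem mem_touched_of_mem {j : Fin s} {u : V} (hu : u ∈ A j) : u ∈ touched b A :=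
  mem_union_right _ (mem_biUnion.mpr ⟨j, mem_univ j, hu⟩)

theorem card_touched_le {k : ℕ} (hA : ∀ j, #(A j) ≤ k) : #(touched b A) ≤ s * (k + 1) :=
  calc #(touched b A) ≤ #(univ.image b) + #(univ.biUnion A) := card_union_le _ _
    _ ≤ s + s * k := by
        gcongr
        · exact card_image_le.trans (by simp)
        · exact card_biUnion_le_card_mul _ _ _ (fun j _ => hA j) |>.trans (by simp)
    _ = s * (k + 1) := by ring

variable [Fintype V]

variable (b A) in
def slots : Finset (Sym2 V) := (univ ×ˢ (touched b A)ᶜ).image fun x => s(b x.1, x.2)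

theorem mem_slots {e : Sym2 V} :
    e ∈ slots b A ↔ ∃ j, ∃ w ∉ touched b A, s(b j, w) = e := by
  simp [slots]

theorem slots_subset_edgeFinset_top : slots b A ⊆ (⊤ : SimpleGraph V).edgeFinset := by
  intro e he
  obtain ⟨j, w, hw, rfl⟩ := mem_slots.mp he
  simp only [SimpleGraph.mem_edgeFinset, SimpleGraph.mem_edgeSet, SimpleGraph.top_adj]
  exact fun h => hw (h ▸ apply_mem_touched j)

theorem card_slots (hb : Function.Injective b) : #(slots b A) = s * #(touched b A)ᶜ := by
  rw [slots, card_image_of_injOn, card_product, card_univ, Fintype.card_fin]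
  rintro ⟨i, v⟩ hv ⟨j, w⟩ hw heq
  simp only [coe_product, coe_univ, Set.mem_prod, Set.mem_univ, true_and, mem_coe,
    mem_compl] at hv hw
  rcases Sym2.eq_iff.mp heq with ⟨hij, hvw⟩ | ⟨hiw, -⟩
  · exact Prod.ext (hb hij) hvw
  · exact absurd ((show b i = w from hiw) ▸ apply_mem_touched i) hw

theorem mk_notMem_slots (hbA : ∀ i j, b i ∉ A j) {j : Fin s} {u v : V} (hu : u ∈ A j)
    (hv : v ∉ touched b A) : s(u, v) ∉ slots b A := by
  rw [mem_slots]
  rintro ⟨i, w, -, heq⟩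
  rcases Sym2.eq_iff.mp heq with ⟨hiu, -⟩ | ⟨hiv, -⟩
  · exact hbA i j (hiu ▸ hu)
  · exact hv (hiv ▸ apply_mem_touched i)

theorem eq_of_edgeFinset_sdiff_slots_eq {G G' : SimpleGraph V} [DecidableRel G.Adj]
    [DecidableRel G'.Adj] (hrest : G.edgeFinset \ slots b A = G'.edgeFinset \ slots b A)
    (hnbr : ∀ j, ∀ w ∉ touched b A, G.Adj (b j) w ↔ G'.Adj (b j) w) : G = G' := by
  ext u v
  by_cases huv : s(u, v) ∈ slots b A
  · obtain ⟨j, w, hw, heq⟩ := mem_slots.mp huv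
    rw [← SimpleGraph.mem_edgeSet, ← SimpleGraph.mem_edgeSet, ← heq]
    exact hnbr j w hw
  · have := congrArg (s(u, v) ∈ ·) hrest
    simpa [huv] using this

variable (b A) in
def restNonNbrs (h : Finset (Sym2 V)) (j : Fin s) : Finset V :=
  {v ∈ (touched b A)ᶜ | ∀ u ∈ A j, s(u, v) ∉ h}

section restNonNbrs

variable {G : SimpleGraph V} [DecidableRel G.Adj]

theorem mem_restNonNbrs_iff (hbA : ∀ i j, b i ∉ A j) (j : Fin s) {v : V}
    (hv : v ∉ touched b A) :
    v ∈ restNonNbrs b A (G.edgeFinset \ slots b A) j ↔ v ∈ G.nonNbrs (A j) := by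
  simp only [restNonNbrs, mem_filter, mem_compl, hv, not_false_eq_true, true_and]
  refine forall₂_congr fun u hu => ?_
  have hvu : v ≠ u := fun h => hv (h ▸ mem_touched_of_mem hu)
  simp [hvu, mk_notMem_slots hbA hu hv]

theorem card_compl_sdiff_restNonNbrs_add_le (hbA : ∀ i j, b i ∉ A j) (j : Fin s) {p r : ℕ}
    (hG : IsDangerFamily G p r b A) :
    #((touched b A)ᶜ \ restNonNbrs b A (G.edgeFinset \ slots b A) j) + r ≤ Fintype.card V := by
  set S := restNonNbrs b A (G.edgeFinset \ slots b A) j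
  have hsub : G.nonNbrs (A j) ⊆ ↑(S ∪ touched b A) := fun v hv => by
    by_cases hvt : v ∈ touched b A
    · simp [hvt]
    · simp [S, (mem_restNonNbrs_iff hbA j hvt).mpr hv]
  have hr : r ≤ #(S ∪ touched b A) := by
    rw [← Set.ncard_coe_finset]
    exact (hG j).1.trans (Set.ncard_le_ncard hsub)
  have h₁ : #(S ∪ touched b A) ≤ #S + #(touched b A) := card_union_le _ _
  have h₂ : #((touched b A)ᶜ \ S) + #S = #(touched b A)ᶜ :=
    card_sdiff_add_card_eq_card (filter_subset _ _)
  have h₃ : #(touched b A)ᶜ + #(touched b A) = Fintype.card V := card_compl_add_card _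
  omega

theorem card_nbrs_inter_restNonNbrs_le (hbA : ∀ i j, b i ∉ A j) (j : Fin s) {p r : ℕ}
    (hG : IsDangerFamily G p r b A) :
    #({w ∈ (touched b A)ᶜ | G.Adj (b j) w} ∩ restNonNbrs b A (G.edgeFinset \ slots b A) j) ≤
      2 * p := by
  refine (Set.ncard_coe_finset _).symm.trans_le ((Set.ncard_le_ncard fun v hv => ?_).trans (hG j).2)
  simp only [coe_inter, coe_filter, Set.mem_inter_iff, Set.mem_ofPred_eq, mem_compl] at hv
  exact ⟨(mem_restNonNbrs_iff hbA j hv.1.1).mp hv.2, hv.1.2⟩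

end restNonNbrs

open scoped Classical in
theorem card_fiber_mul_le (hbA : ∀ i j, b i ∉ A j) (p r : ℕ) (h : Finset (Sym2 V)) :
    #{G | IsDangerFamily G p r b A ∧ G.edgeFinset \ slots b A = h} * 2 ^ (s * r) ≤
      ((Fintype.card V + 1) ^ (2 * p) * 2 ^ Fintype.card V) ^ s := by
  set F : Finset (SimpleGraph V) := {G | IsDangerFamily G p r b A ∧ G.edgeFinset \ slots b A = h}
  rcases F.eq_empty_or_nonempty with hF | ⟨G₀, hG₀⟩
  · simp [hF]
  obtain ⟨hG₀_danger, rfl⟩ := (mem_filter.mp hG₀).2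
  set T := (touched b A)ᶜ
  -- `S j` is the part of `N^c(A j)` among untouched vertices; it is the same for all of `F`.
  set S := restNonNbrs b A (G₀.edgeFinset \ slots b A)
  set nbrs : SimpleGraph V → Fin s → Finset V := fun G j => {w ∈ T | G.Adj (b j) w}
  have hmaps : Set.MapsTo nbrs F
      (Fintype.piFinset fun j => {X ∈ T.powerset | #(X ∩ S j) ≤ 2 * p}) := fun G hG => by
    obtain ⟨hG, hGG₀⟩ := (mem_filter.mp hG).2
    refine Fintype.mem_piFinset.mpr fun j =>
      mem_filter.mpr ⟨mem_powerset.mpr (filter_subset _ _), ?_⟩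
    simpa only [S, ← hGG₀] using card_nbrs_inter_restNonNbrs_le hbA j hG
  have hinj : Set.InjOn nbrs F := fun G hG G' hG' hGG' =>
    eq_of_edgeFinset_sdiff_slots_eq ((mem_filter.mp hG).2.2.trans (mem_filter.mp hG').2.2.symm)
      fun j w hw => by simpa [nbrs, T, hw] using congrArg (w ∈ ·) (congrFun hGG' j)
  calc #F * 2 ^ (s * r)
      ≤ (∏ j, #{X ∈ T.powerset | #(X ∩ S j) ≤ 2 * p}) * ∏ _j : Fin s, 2 ^ r := by
        rw [prod_const, card_univ, Fintype.card_fin, ← pow_mul, mul_comm r]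
        gcongr
        rw [← Fintype.card_piFinset]
        exact card_le_card_of_injOn _ hmaps hinj
    _ ≤ ∏ j : Fin s, (Fintype.card V + 1) ^ (2 * p) * 2 ^ #(T \ S j) * 2 ^ r := by
        rw [← prod_mul_distrib]
        gcongr with j
        exact card_filter_card_inter_le T (S j) (2 * p)
    _ ≤ ∏ _j : Fin s, (Fintype.card V + 1) ^ (2 * p) * 2 ^ Fintype.card V := by
        refine prod_le_prod' fun j _ => ?_
        rw [mul_assoc, ← pow_add]
        gcongr
        · norm_num
        · exact card_compl_sdiff_restNonNbrs_add_le hbA j hG₀_danger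
    _ = ((Fintype.card V + 1) ^ (2 * p) * 2 ^ Fintype.card V) ^ s := by simp

open scoped Classical in
theorem card_isDangerFamily_mul_two_pow_card_slots_le (hbA : ∀ i j, b i ∉ A j) (p r : ℕ) :
    #{G | IsDangerFamily G p r b A} * 2 ^ (s * r) * 2 ^ #(slots b A) ≤
      ((Fintype.card V + 1) ^ (2 * p) * 2 ^ Fintype.card V) ^ s *
        2 ^ (Fintype.card V).choose 2 := by
  set bad : Finset (SimpleGraph V) := {G | IsDangerFamily G p r b A}
  set rest : SimpleGraph V → Finset (Sym2 V) := fun G => G.edgeFinset \ slots b A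
  set R := (⊤ : SimpleGraph V).edgeFinset \ slots b A
  have himage : #(bad.image rest) ≤ 2 ^ #R := by
    rw [← card_powerset]
    refine card_le_card fun h hh => ?_
    obtain ⟨G, -, rfl⟩ := mem_image.mp hh
    exact mem_powerset.mpr (sdiff_subset_sdiff (SimpleGraph.edgeFinset_mono le_top) le_rfl)
  have hR : #R + #(slots b A) = (Fintype.card V).choose 2 := by
    rw [card_sdiff_add_card_eq_card slots_subset_edgeFinset_top,
      SimpleGraph.card_edgeFinset_top_eq_card_choose_two]
  calc #bad * 2 ^ (s * r) * 2 ^ #(slots b A)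
      = (∑ h ∈ bad.image rest, #{G ∈ bad | rest G = h} * 2 ^ (s * r)) * 2 ^ #(slots b A) := by
        rw [card_eq_sum_card_image rest bad, sum_mul]
    _ ≤ (#(bad.image rest) * ((Fintype.card V + 1) ^ (2 * p) * 2 ^ Fintype.card V) ^ s) *
          2 ^ #(slots b A) := by
        gcongr
        refine sum_le_card_nsmul _ _ _ fun h _ => ?_
        rw [filter_filter]
        exact card_fiber_mul_le hbA p r h
    _ ≤ ((Fintype.card V + 1) ^ (2 * p) * 2 ^ Fintype.card V) ^ s *
          2 ^ (Fintype.card V).choose 2 := by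
        rw [← hR, pow_add, mul_comm _ (_ ^ s), mul_assoc]
        gcongr

open scoped Classical in
theorem card_isDangerFamily_mul_le (hb : Function.Injective b) (hbA : ∀ i j, b i ∉ A j)
    {k : ℕ} (hA : ∀ j, #(A j) = k) (p r : ℕ) :
    #{G | IsDangerFamily G p r b A} * 2 ^ (s * r) ≤
      ((Fintype.card V + 1) ^ (2 * p) * 2 ^ (s * (k + 1))) ^ s *
        2 ^ (Fintype.card V).choose 2 := by
  refine Nat.le_of_mul_le_mul_right ?_ (pow_pos two_pos #(slots b A))
  refine (card_isDangerFamily_mul_two_pow_card_slots_le hbA p r).trans ?_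
  have hn : Fintype.card V ≤ #(touched b A)ᶜ + s * (k + 1) := by
    rw [← card_compl_add_card (touched b A)]
    exact Nat.add_le_add_left (card_touched_le fun j => (hA j).le) _
  calc ((Fintype.card V + 1) ^ (2 * p) * 2 ^ Fintype.card V) ^ s * 2 ^ (Fintype.card V).choose 2
      ≤ ((Fintype.card V + 1) ^ (2 * p) * 2 ^ (s * (k + 1) + #(touched b A)ᶜ)) ^ s *
          2 ^ (Fintype.card V).choose 2 := by
        gcongr
        · norm_num
        · omega
    _ = _ := by rw [card_slots hb]; ring

end FixedFamily

section Counting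

variable {V : Type*} [Fintype V] [DecidableEq V]

open scoped Classical in
theorem card_many_dangerous_mul_le {s : ℕ} (k p m r : ℕ) (hs : s ≤ m ⌈/⌉ (2 * k + 1)) :
    #{G : SimpleGraph V | (∀ S : Finset V, #S = k → r ≤ (G.nonNbrs S).ncard) ∧
        m ≤ {v | Dangerous G k p v}.ncard} * 2 ^ (s * r) ≤
      2 ^ (s * s * (k + 1)) * (Fintype.card V + 1) ^ (s * (k + 1) + 2 * p * s) *
        2 ^ (Fintype.card V).choose 2 := by
  set n := Fintype.card V
  set families : Finset ((Fin s → V) × (Fin s → Finset V)) :=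
    {d ∈ Fintype.piFinset (fun _ => univ) ×ˢ Fintype.piFinset (fun _ => powersetCard k univ) |
      Function.Injective d.1 ∧ ∀ i j, d.1 i ∉ d.2 j}
  have hcover : ({G | (∀ S : Finset V, #S = k → r ≤ (G.nonNbrs S).ncard) ∧
      m ≤ {v | Dangerous G k p v}.ncard} : Finset (SimpleGraph V)) ⊆
        families.biUnion fun d => {G | IsDangerFamily G p r d.1 d.2} := fun G hG => by
    obtain ⟨hδ, hm⟩ := (mem_filter.mp hG).2
    obtain ⟨b, A, hb, hA, hbA, hG⟩ := exists_isDangerFamily hs hδ hm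
    exact mem_biUnion.mpr ⟨(b, A), by simp [families, hb, hA, hbA], by simpa using hG⟩
  have hfamilies : #families ≤ (n + 1) ^ (s * (k + 1)) :=
    calc #families ≤ n ^ s * (n.choose k) ^ s := by
          refine (card_filter_le _ _).trans ?_
          simp [card_product, Fintype.card_piFinset, n]
      _ ≤ (n + 1) ^ s * ((n + 1) ^ k) ^ s := by
          gcongr
          · omega
          · exact (Nat.choose_le_pow n k).trans (Nat.pow_le_pow_left n.le_succ k)
      _ = (n + 1) ^ (s * (k + 1)) := by ring
  calc _ ≤ (∑ d ∈ families, #{G | IsDangerFamily G p r d.1 d.2}) * 2 ^ (s * r) := by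
        gcongr
        exact (card_le_card hcover).trans card_biUnion_le
    _ ≤ #families * (((n + 1) ^ (2 * p) * 2 ^ (s * (k + 1))) ^ s * 2 ^ n.choose 2) := by
        rw [sum_mul]
        refine sum_le_card_nsmul _ _ _ fun d hd => ?_
        simp only [families, mem_filter, mem_product, Fintype.mem_piFinset, mem_powersetCard]
          at hd
        exact card_isDangerFamily_mul_le hd.2.1 hd.2.2 (fun j => (hd.1.2 j).2) p r
    _ ≤ (n + 1) ^ (s * (k + 1)) * (((n + 1) ^ (2 * p) * 2 ^ (s * (k + 1))) ^ s *
          2 ^ n.choose 2) := by gcongr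
    _ = _ := by ring

end Counting

section Asymptotics

theorem three_halves_le_ceilDiv_mul (k : ℕ) {ξ : ℝ} (hξ : 0 < ξ) :
    3 / 2 ≤ ((⌈3 * ((k : ℝ) + 1) / ξ⌉₊ ⌈/⌉ (2 * k + 1) : ℕ) : ℝ) * ξ := by
  set q := ⌈3 * ((k : ℝ) + 1) / ξ⌉₊
  have hq : 3 * ((k : ℝ) + 1) ≤ q * ξ := (div_le_iff₀ hξ).mp (Nat.le_ceil _)
  have hs : (q : ℝ) ≤ (2 * k + 1) * ((q ⌈/⌉ (2 * k + 1) : ℕ) : ℝ) := by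
    exact_mod_cast le_smul_ceilDiv (by omega : 0 < 2 * k + 1)
  nlinarith

theorem two_rpow_half_eq_sqrt_two_pow (n : ℕ) : (2 : ℝ) ^ ((n : ℝ) / 2) = √2 ^ n := by
  rw [Real.sqrt_eq_rpow, ← Real.rpow_natCast, ← Real.rpow_mul zero_le_two]
  ring_nf

theorem eventually_mul_pow_le_two_rpow_half (C : ℝ) (a : ℕ) :
    ∀ᶠ n : ℕ in atTop, C * ((n : ℝ) + 1) ^ a ≤ 2 ^ ((n : ℝ) / 2) := by
  have h := ((isLittleO_pow_const_const_pow_of_one_lt a Real.one_lt_sqrt_two).const_mul_left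
    C).comp_tendsto (tendsto_add_atTop_nat 1)
  filter_upwards [h.bound (by positivity : (0 : ℝ) < 1 / √2)] with n hn
  calc C * ((n : ℝ) + 1) ^ a ≤ ‖C * ((n + 1 : ℕ) : ℝ) ^ a‖ := by
        push_cast
        exact Real.le_norm_self _
    _ ≤ 1 / √2 * ‖√2 ^ (n + 1)‖ := hn
    _ = 2 ^ ((n : ℝ) / 2) := by
        rw [two_rpow_half_eq_sqrt_two_pow, Real.norm_of_nonneg (by positivity), pow_succ]
        field_simp

theorem le_two_rpow_neg_mul_of_mul_two_pow_le {X P x : ℝ} {t N : ℕ}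
    (hX : X * 2 ^ t ≤ P * 2 ^ N) (ht : 3 / 2 * x ≤ t) (hP : P ≤ 2 ^ (x / 2)) :
    X ≤ 2 ^ (-x) * 2 ^ N := by
  have h2t : (0 : ℝ) < 2 ^ t := by positivity
  calc X ≤ P * 2 ^ N / 2 ^ t := (le_div_iff₀ h2t).mpr hX
    _ ≤ 2 ^ (x / 2) * 2 ^ N / 2 ^ t := by gcongr
    _ = 2 ^ (x / 2 - t) * 2 ^ N := by rw [Real.rpow_sub two_pos, Real.rpow_natCast]; ring
    _ ≤ 2 ^ (-x) * 2 ^ N := by gcongr <;> [norm_num; linarith]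

end Asymptotics

theorem many_dangerous_count_general (k : ℕ) (ξ : ℝ) (hξ : 0 < ξ) :
    ∀ᶠ n : ℕ in atTop,
      (Nat.card {G : SimpleGraph (Fin n) //
          ξ * n ≤ (deltaK G k : ℝ) ∧
          ⌈3 * ((k : ℝ) + 1) / ξ⌉₊ ≤
            {b : Fin n | Dangerous G k ⌈3 * ((k : ℝ) + 1) / ξ⌉₊ b}.ncard} : ℝ) ≤
        2 ^ (-(n : ℝ)) * 2 ^ (n * (n - 1) / 2) := by
  classical
  set q := ⌈3 * ((k : ℝ) + 1) / ξ⌉₊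
  set s := q ⌈/⌉ (2 * k + 1)
  filter_upwards [eventually_mul_pow_le_two_rpow_half (2 ^ (s * s * (k + 1)))
    (s * (k + 1) + 2 * q * s)] with n hn
  have hbad : Nat.card {G : SimpleGraph (Fin n) //
      ξ * n ≤ (deltaK G k : ℝ) ∧ q ≤ {b : Fin n | Dangerous G k q b}.ncard} ≤
        #{G : SimpleGraph (Fin n) | (∀ S : Finset (Fin n), #S = k →
          ⌈ξ * n⌉₊ ≤ (G.nonNbrs S).ncard) ∧ q ≤ {v | Dangerous G k q v}.ncard} := by
    rw [Nat.card_eq_fintype_card, Fintype.card_subtype]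
    refine card_le_card fun G hG => ?_
    simp only [mem_filter, mem_univ, true_and] at hG ⊢
    refine ⟨fun S hS => ?_, hG.2⟩
    exact Nat.ceil_le.mpr (hG.1.trans (by exact_mod_cast deltaK_le_ncard_nonNbrs G hS))
  have hcount := card_many_dangerous_mul_le (V := Fin n) (s := s) k q q ⌈ξ * n⌉₊ le_rfl
  rw [Fintype.card_fin, Nat.choose_two_right] at hcount
  refine le_two_rpow_neg_mul_of_mul_two_pow_le (t := s * ⌈ξ * n⌉₊) ?_ ?_ (by simpa using hn)
  · exact_mod_cast (Nat.mul_le_mul_right _ hbad).trans hcount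
  · push_cast
    nlinarith [three_halves_le_ceilDiv_mul k hξ, Nat.le_ceil (ξ * n)]

/-- With `q = ⌈3(k+1)/ξ⌉`, for all large `n`, the number of labelled graphs on `{1,…,n}` with
`δ_k ≥ ξn` having at least `q` `(k,q)`-dangerous vertices is at most `2^{-n} · 2^{n(n-1)/2}`. -/
theorem many_dangerous_count (k : ℕ) (hk : 1 ≤ k) (ξ : ℝ) (hξ : 0 < ξ) (hξ1 : ξ ≤ 1) :
    ∀ᶠ n : ℕ in atTop,
      (Nat.card {G : SimpleGraph (Fin n) //
          ξ * n ≤ (deltaK G k : ℝ) ∧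
          ⌈3 * ((k : ℝ) + 1) / ξ⌉₊ ≤
            {b : Fin n | Dangerous G k ⌈3 * ((k : ℝ) + 1) / ξ⌉₊ b}.ncard} : ℝ) ≤
        2 ^ (-(n : ℝ)) * 2 ^ (n * (n - 1) / 2) :=
  many_dangerous_count_general k ξ hξ
end

section
/- Let G be a finite simple graph with at least two vertices and let u be a corner of G. Then G is cop-win if and only if the induced subgraph G − u (obtained by deleting u) is cop-win. -/
open Filter Topology

/-!
A corner `u`, dominated by `v`, gives a retraction of `G` onto `G - u` folding `u` onto `v`.
Retractions preserve cop-win: the cops of `G - u` play the image of a winning strategy of `G`.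
Conversely the cops of `G` play a winning strategy of `G - u` against the robber's shadow
(the robber himself, or `v` while he sits on `u`); once the shadow is caught the robber is
within reach, since every closed neighbourhood of `G` lies in that of its shadow.
-/

def SimpleGraph.IsWeakHom {V W : Type*} (G : SimpleGraph V) (H : SimpleGraph W) (f : V → W) :
    Prop :=
  ∀ ⦃a b⦄, b = a ∨ G.Adj a b → f b = f a ∨ H.Adj (f a) (f b)

namespace CopsWinPos

variable {V W : Type*} {G : SimpleGraph V} {H : SimpleGraph W} {k : ℕ}

theorem of_exists_eq {c : Fin k → V} {r : V} (h : ∃ i, c i = r) : CopsWinPos G c r :=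
  capture c r c (fun _ => Or.inl rfl) h

theorem map_retract {f : V → W} (hf : G.IsWeakHom H f)
    (g : H →g G) (hfg : Function.LeftInverse f g) {c : Fin k → V} {s : W}
    (h : CopsWinPos G c (g s)) : CopsWinPos H (f ∘ c) s := by
  generalize hr : g s = r at h
  induction h generalizing s with
  | capture c r c' hmove hc =>
    obtain ⟨i, hi⟩ := hc
    exact capture _ _ (f ∘ c') (fun j => hf (hmove j))
      ⟨i, by rw [Function.comp_apply, hi, ← hr, hfg]⟩
  | advance c r c' hmove _ ih =>
    refine advance _ _ (f ∘ c') (fun j => hf (hmove j)) fun s' hs' => ih (g s') ?_ rfl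
    rcases hs' with rfl | hadj
    · exact Or.inl hr
    · exact Or.inr (hr ▸ g.map_adj hadj)

theorem of_shadow {f : V → W} (hf : G.IsWeakHom H f)
    (g : H →g G) (hdom : ∀ ⦃r r'⦄, r' = r ∨ G.Adj r r' → r' = g (f r) ∨ G.Adj (g (f r)) r')
    {c : Fin k → W} {r : V} (h : CopsWinPos H c (f r)) : CopsWinPos G (g ∘ c) r := by
  generalize hs : f r = s at h
  induction h generalizing r with
  | capture c s c' hmove hc =>
    obtain ⟨i, hi⟩ := hc
    refine advance _ _ (g ∘ c') (fun j => (hmove j).imp (congrArg g) g.map_adj) fun r' hr' =>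
      capture _ _ (Function.update (g ∘ c') i r') (fun j => ?_) ⟨i, Function.update_self ..⟩
    rcases eq_or_ne j i with rfl | hj
    · rw [Function.update_self, Function.comp_apply, hi, ← hs]
      exact hdom hr'
    · exact Or.inl (Function.update_of_ne hj ..)
  | advance c s c' hmove _ ih =>
    exact advance _ _ (g ∘ c') (fun j => (hmove j).imp (congrArg g) g.map_adj)
      fun r' hr' => ih (f r') (hs ▸ hf hr') rfl

end CopsWinPos

section IsKCopWin

variable {V W : Type*} {G : SimpleGraph V} {H : SimpleGraph W} {k : ℕ}

theorem isKCopWin_iff_exists_forall_copsWinPos :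
    IsKCopWin G k ↔ ∃ c : Fin k → V, ∀ r, CopsWinPos G c r :=
  exists_congr fun _ => forall_congr' fun _ => or_iff_right_of_imp CopsWinPos.of_exists_eq

theorem IsKCopWin.of_retract {f : V → W} (hf : G.IsWeakHom H f)
    (g : H →g G) (hfg : Function.LeftInverse f g) (h : IsKCopWin G k) : IsKCopWin H k := by
  obtain ⟨c, hc⟩ := isKCopWin_iff_exists_forall_copsWinPos.1 h
  exact isKCopWin_iff_exists_forall_copsWinPos.2
    ⟨f ∘ c, fun s => CopsWinPos.map_retract hf g hfg (hc (g s))⟩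

theorem IsKCopWin.of_shadow {f : V → W} (hf : G.IsWeakHom H f)
    (g : H →g G) (hdom : ∀ ⦃r r'⦄, r' = r ∨ G.Adj r r' → r' = g (f r) ∨ G.Adj (g (f r)) r')
    (h : IsKCopWin H k) : IsKCopWin G k := by
  obtain ⟨c, hc⟩ := isKCopWin_iff_exists_forall_copsWinPos.1 h
  exact isKCopWin_iff_exists_forall_copsWinPos.2
    ⟨g ∘ c, fun r => CopsWinPos.of_shadow hf g hdom (hc (f r))⟩

end IsKCopWin

namespace SimpleGraph

variable {V : Type*} {G : SimpleGraph V} {u v : V}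

open Classical in
noncomputable def cornerFold (hvu : v ≠ u) (r : V) : {w : V | w ≠ u} :=
  if h : r = u then ⟨v, hvu⟩ else ⟨r, h⟩

theorem cornerFold_self (hvu : v ≠ u) : (cornerFold hvu u : V) = v := by
  simp [cornerFold]

theorem cornerFold_of_ne (hvu : v ≠ u) {r : V} (hr : r ≠ u) : (cornerFold hvu r : V) = r := by
  simp [cornerFold, hr]

theorem leftInverse_cornerFold (hvu : v ≠ u) :
    Function.LeftInverse (cornerFold hvu) ((↑) : {w : V | w ≠ u} → V) :=
  fun s => Subtype.ext (cornerFold_of_ne hvu s.2)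

variable (hvu : v ≠ u) (hcorner : ∀ w : V, (w = u ∨ G.Adj w u) → (w = v ∨ G.Adj w v))
include hcorner

theorem closedNbhd_subset_cornerFold ⦃r r' : V⦄ (hr' : r' = r ∨ G.Adj r r') :
    r' = cornerFold hvu r ∨ G.Adj (cornerFold hvu r) r' := by
  by_cases hr : r = u
  · subst hr
    rw [cornerFold_self]
    exact (hcorner r' (hr'.imp_right Adj.symm)).imp_right Adj.symm
  · rwa [cornerFold_of_ne hvu hr]

theorem isWeakHom_cornerFold : G.IsWeakHom (G.induce {w : V | w ≠ u}) (cornerFold hvu) := by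
  intro r r' hr'
  have hback := closedNbhd_subset_cornerFold hvu hcorner hr'
  have hfold := closedNbhd_subset_cornerFold hvu hcorner (hback.imp Eq.symm Adj.symm)
  exact hfold.imp (fun h => Subtype.ext h.symm) Adj.symm

end SimpleGraph

theorem copWin_iff_deleteCorner_general {V : Type*} (G : SimpleGraph V)
    (u v : V) (hvu : v ≠ u)
    (hcorner : ∀ w : V, (w = u ∨ G.Adj w u) → (w = v ∨ G.Adj w v)) :
    IsKCopWin G 1 ↔ IsKCopWin (G.induce {w : V | w ≠ u}) 1 :=
  ⟨IsKCopWin.of_retract (G.isWeakHom_cornerFold hvu hcorner)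
      (SimpleGraph.Embedding.induce _).toHom (SimpleGraph.leftInverse_cornerFold hvu),
    IsKCopWin.of_shadow (G.isWeakHom_cornerFold hvu hcorner)
      (SimpleGraph.Embedding.induce _).toHom (G.closedNbhd_subset_cornerFold hvu hcorner)⟩

/-- If `u` is a corner of a finite graph `G` with at least two vertices (witnessed by `v ≠ u`
with `N[u] ⊆ N[v]`), then `G` is cop-win iff `G - u` is cop-win. -/
theorem copWin_iff_deleteCorner {V : Type*} [Fintype V] (G : SimpleGraph V)
    (h2 : 2 ≤ Fintype.card V) (u v : V) (hvu : v ≠ u)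
    (hcorner : ∀ w : V, (w = u ∨ G.Adj w u) → (w = v ∨ G.Adj w v)) :
    IsKCopWin G 1 ↔ IsKCopWin (G.induce {w : V | w ≠ u}) 1 :=
  copWin_iff_deleteCorner_general G u v hvu hcorner
end
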